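/- Let v_t(x) = p(x) + c₀ε(w(x) − 1) + t where p(x) = x_n + σ, |σ| < 1/10, w is the radial barrier centered at x̄ = (1/5)e_n on the annulus A = B_{3/4}(x̄) \ B_{1/20}(x̄), and 0 ≤ t. Then for ε sufficiently small (depending only on n, γ, c₀), at every point of the zero level set {v_t = 0} ∩ A one has |∇v_t| ≥ 1 + c₂ ε for a constant c₂ > 0 depending only on γ and n. -/

import Mathlib

open Metric MeasureTheory Real
open scoped RealInnerProductSpace

/-- The last coordinate `x_n` of a point of `ℝ^{n+1}`. -/
def xn {n : ℕ} (x : EuclideanSpace ℝ (Fin (n + 1))) : ℝ := x (Fin.last n)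

/-- The unit vector `e_n` of `ℝ^{n+1}`. -/
noncomputable def en {n : ℕ} : EuclideanSpace ℝ (Fin (n + 1)) :=
  EuclideanSpace.single (Fin.last n) 1

/-! With `b = (1/20)^γ - (3/4)^γ > 0` and `r = |x - x̄|`, the chain rule gives
`∇v_t(x) = e_n + (c₀ε/b) γ r^(γ-2) (x - x̄)`. On the zero level set `w ≥ 0` forces
`x_n ≤ |σ| + ε ≤ 3/20`, so `⟨x - x̄, e_n⟩ ≤ -1/20`; as `γ < 0` and `r < 3/4`, the radial term
then pushes the `e_n`-component of the gradient up by at least `(c₀ε/b)|γ|(3/4)^(γ-2)/20`, and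
`|∇v_t| ≥ ⟨∇v_t, e_n⟩`. -/

section InnerProductSpace

variable {E : Type*} [NormedAddCommGroup E] [InnerProductSpace ℝ E]

theorem hasFDerivAt_norm_rpow_of_ne_zero {x : E} (hx : x ≠ 0) (p : ℝ) :
    HasFDerivAt (fun y : E ↦ ‖y‖ ^ p) ((p * ‖x‖ ^ (p - 2)) • innerSL ℝ x) x := by
  apply HasStrictFDerivAt.hasFDerivAt
  convert (hasStrictFDerivAt_norm_sq x).rpow_const (p := p / 2) (by simp [hx]) using 1
  · ext y
    simp_rw [← Real.rpow_natCast_mul (norm_nonneg _)]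
    ring_nf
  · simp_rw [← Real.rpow_natCast_mul (norm_nonneg _), ← Nat.cast_smul_eq_nsmul ℝ, smul_smul]
    ring_nf

theorem hasFDerivAt_norm_sub_rpow {x c : E} (hx : x ≠ c) (p : ℝ) :
    HasFDerivAt (fun y : E ↦ ‖y - c‖ ^ p) ((p * ‖x - c‖ ^ (p - 2)) • innerSL ℝ (x - c)) x := by
  refine ((hasFDerivAt_norm_rpow_of_ne_zero (sub_ne_zero.mpr hx) p).comp x
    ((hasFDerivAt_id x).sub_const c)).congr_fderiv ?_
  ext
  simp

theorem HasFDerivAt.apply_le_norm_gradient_mul_norm [CompleteSpace E] {f : E → ℝ}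
    {f' : StrongDual ℝ E} {x : E} (hf : HasFDerivAt f f' x) (v : E) :
    f' v ≤ ‖gradient f x‖ * ‖v‖ := by
  rw [gradient, hf.fderiv, ← InnerProductSpace.toDual_symm_apply]
  exact real_inner_le_norm _ _

theorem one_add_mul_inner_le_norm_gradient [CompleteSpace E] {e c x : E} (he : ‖e‖ = 1)
    (hx : x ≠ c) (σ κ γ a b t : ℝ) :
    1 + κ * (b⁻¹ * (γ * ‖x - c‖ ^ (γ - 2) * ⟪x - c, e⟫)) ≤
      ‖gradient (fun y => (⟪e, y⟫ + σ) + κ * ((‖y - c‖ ^ γ - a) / b - 1) + t) x‖ := by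
  have hf := (((innerSL ℝ e).hasFDerivAt.add_const σ).add
    ((((hasFDerivAt_norm_sub_rpow hx γ).sub_const a).mul_const b⁻¹).sub_const 1 |>.const_mul κ))
    |>.add_const t
  convert hf.apply_le_norm_gradient_mul_norm e using 3
  · simp only [add_apply, smul_apply, smul_eq_mul, innerSL_apply_apply,
      real_inner_self_eq_norm_sq, he, one_pow, real_inner_comm e]
  · simp only [he, mul_one, div_eq_mul_inv, Pi.add_apply, innerSL_apply_apply]

end InnerProductSpace

theorem xn_eq_inner {n : ℕ} (x : EuclideanSpace ℝ (Fin (n + 1))) : xn x = ⟪en, x⟫ := by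
  simp [en, xn, EuclideanSpace.inner_single_left]

theorem norm_en {n : ℕ} : ‖(en : EuclideanSpace ℝ (Fin (n + 1)))‖ = 1 := by
  simp [en]

theorem inner_sub_smul_en_en {n : ℕ} (x : EuclideanSpace ℝ (Fin (n + 1))) (a : ℝ) :
    ⟪x - a • en, en⟫ = xn x - a := by
  rw [inner_sub_left, real_inner_smul_left, real_inner_self_eq_norm_sq, norm_en, real_inner_comm,
    xn_eq_inner]
  ring

theorem le_abs_add_of_add_mul_sub_one_add_eq_zero {s σ c₀ ε w t : ℝ} (hc₀ : 0 ≤ c₀)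
    (hc₀1 : c₀ ≤ 1) (hε : 0 ≤ ε) (hw : 0 ≤ w) (ht : 0 ≤ t)
    (h : s + σ + c₀ * ε * (w - 1) + t = 0) : s ≤ |σ| + ε := by
  have : c₀ * ε * (1 - w) ≤ ε := by
    nlinarith [mul_nonneg (mul_nonneg hc₀ hε) hw, mul_nonneg (sub_nonneg.2 hc₀1) hε]
  linarith [neg_abs_le σ]

theorem stmt8_general {n : ℕ} (γ : ℝ) (hγ : γ < 0)
    (c₀ : ℝ) (hc₀ : 0 < c₀) (hc₀1 : c₀ < 1) :
    ∃ ε₀ > (0 : ℝ), ∃ c₂ > (0 : ℝ), ∀ ε : ℝ, 0 < ε → ε ≤ ε₀ →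
      ∀ σ : ℝ, |σ| < 1 / 10 → ∀ t : ℝ, 0 ≤ t →
        ∀ x ∈ ball ((1 / 5 : ℝ) • en (n := n)) (3 / 4) \
            closedBall ((1 / 5 : ℝ) • en (n := n)) (1 / 20),
          (xn x + σ) + c₀ * ε *
              ((‖x - (1 / 5 : ℝ) • en (n := n)‖ ^ γ - (3 / 4 : ℝ) ^ γ) /
                ((1 / 20 : ℝ) ^ γ - (3 / 4 : ℝ) ^ γ) - 1) + t = 0 →
          1 + c₂ * ε ≤
            ‖gradient (fun y => (xn y + σ) + c₀ * ε *
                ((‖y - (1 / 5 : ℝ) • en (n := n)‖ ^ γ - (3 / 4 : ℝ) ^ γ) /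
                  ((1 / 20 : ℝ) ^ γ - (3 / 4 : ℝ) ^ γ) - 1) + t) x‖ := by
  set c : EuclideanSpace ℝ (Fin (n + 1)) := (1 / 5 : ℝ) • en
  set b := (1 / 20 : ℝ) ^ γ - (3 / 4 : ℝ) ^ γ
  have hb : 0 < b := sub_pos.2 (rpow_lt_rpow_of_neg (by norm_num) (by norm_num) hγ)
  clear_value b
  refine ⟨1 / 20, by norm_num, c₀ * -γ * (3 / 4 : ℝ) ^ (γ - 2) / (20 * b),
    div_pos (by have := neg_pos.2 hγ; positivity) (by positivity), ?_⟩
  rintro ε hε hε₀ σ hσ t ht x ⟨hx_lt, hx_gt⟩ hzero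
  rw [mem_ball_iff_norm] at hx_lt
  rw [mem_closedBall_iff_norm, not_le] at hx_gt
  set r := ‖x - c‖
  have hr : 0 < r := lt_trans (by norm_num) hx_gt
  have hw : 0 ≤ (r ^ γ - (3 / 4 : ℝ) ^ γ) / b :=
    div_nonneg (sub_nonneg.2 (rpow_le_rpow_of_nonpos hr hx_lt.le hγ.le)) hb.le
  have hxn : xn x - 1 / 5 ≤ -(1 / 20) := by
    linarith [le_abs_add_of_add_mul_sub_one_add_eq_zero hc₀.le hc₀1.le hε.le hw ht hzero]
  calc 1 + c₀ * -γ * (3 / 4 : ℝ) ^ (γ - 2) / (20 * b) * ε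
      = 1 + c₀ * ε * (b⁻¹ * (-γ * (3 / 4 : ℝ) ^ (γ - 2) * (1 / 20))) := by ring
    _ ≤ 1 + c₀ * ε * (b⁻¹ * (-γ * r ^ (γ - 2) * (1 / 5 - xn x))) := by
        have hγ_nonneg : 0 ≤ -γ := by linarith
        gcongr 1 + c₀ * ε * (b⁻¹ * (-γ * ?_ * ?_))
        · exact rpow_le_rpow_of_nonpos hr hx_lt.le (by linarith)
        · linarith
    _ = 1 + c₀ * ε * (b⁻¹ * (γ * r ^ (γ - 2) * ⟪x - c, en⟫)) := by
        rw [inner_sub_smul_en_en]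
        ring
    _ ≤ _ := by
        simp_rw [xn_eq_inner]
        exact one_add_mul_inner_le_norm_gradient norm_en (sub_ne_zero.1 (norm_pos_iff.1 hr)) ..

/-- On the zero level set of the barrier `v_t = p + c₀ε(w - 1) + t` inside the
annulus `A`, the gradient satisfies `|∇v_t| ≥ 1 + c₂ ε` for small `ε`. -/
theorem stmt8 {n : ℕ} (hn : 1 ≤ n) (γ : ℝ) (hγ : γ < 0)
    (hγn : γ < 2 - ((n : ℝ) + 1)) (c₀ : ℝ) (hc₀ : 0 < c₀) (hc₀1 : c₀ < 1) :
    ∃ ε₀ > (0 : ℝ), ∃ c₂ > (0 : ℝ), ∀ ε : ℝ, 0 < ε → ε ≤ ε₀ →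
      ∀ σ : ℝ, |σ| < 1 / 10 → ∀ t : ℝ, 0 ≤ t →
        ∀ x ∈ ball ((1 / 5 : ℝ) • en (n := n)) (3 / 4) \
            closedBall ((1 / 5 : ℝ) • en (n := n)) (1 / 20),
          (xn x + σ) + c₀ * ε *
              ((‖x - (1 / 5 : ℝ) • en (n := n)‖ ^ γ - (3 / 4 : ℝ) ^ γ) /
                ((1 / 20 : ℝ) ^ γ - (3 / 4 : ℝ) ^ γ) - 1) + t = 0 →
          1 + c₂ * ε ≤
            ‖gradient (fun y => (xn y + σ) + c₀ * ε *
                ((‖y - (1 / 5 : ℝ) • en (n := n)‖ ^ γ - (3 / 4 : ℝ) ^ γ) /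
                  ((1 / 20 : ℝ) ^ γ - (3 / 4 : ℝ) ^ γ) - 1) + t) x‖ :=
  stmt8_general γ hγ c₀ hc₀ hc₀1
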